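/- The Strict Nanson voting method violates positive involvement: there exists a profile P, a candidate x ∈ StrictNanson(P), and a profile P' obtained from P by adding one new voter whose ballot ranks x in first place, such that x ∉ StrictNanson(P'). (A witness: P is the 10-voter profile on candidates {a,b,c,d} with ballots acdb, dbca, cbad, cbad, cbad, adcb, adcb, adcb, dcab, dcba, in which StrictNanson(P) = {c}; adding a voter with ballot cdba yields StrictNanson(P') = {d}.) -/
import Mathlib


open scoped Classical

/-- `r` is a strict linear order on the finite set `X`, relating only members of `X`. -/
def IsLinOn (X : Finset ℕ) (r : ℕ → ℕ → Prop) : Prop :=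
  (∀ a b, r a b → a ∈ X ∧ b ∈ X) ∧
  (∀ a, ¬ r a a) ∧
  (∀ a b c, r a b → r b c → r a c) ∧
  (∀ a ∈ X, ∀ b ∈ X, a ≠ b → r a b ∨ r b a)

/-- A profile assigns to each voter in a nonempty finite set of voters a strict linear
order (ballot) on a nonempty finite set of candidates.  Voters and candidates are both
drawn from the infinite set `ℕ`. -/
structure Profile where
  voters : Finset ℕ
  cands : Finset ℕ
  voters_nonempty : voters.Nonempty
  cands_nonempty : cands.Nonempty
  ballot : ℕ → ℕ → ℕ → Prop
  ballot_lin : ∀ i ∈ voters, IsLinOn cands (ballot i)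

/-- `F` is a voting method: it assigns to each profile a nonempty set of winners
among the candidates of the profile. -/
def VotingMethod (F : Profile → Finset ℕ) : Prop :=
  ∀ P : Profile, (F P).Nonempty ∧ F P ⊆ P.cands

/-- The ballot `r` ranks `x` in first place among the candidates in `X`. -/
def RanksFirst (X : Finset ℕ) (r : ℕ → ℕ → Prop) (x : ℕ) : Prop :=
  x ∈ X ∧ ∀ y ∈ X, y ≠ x → r x y

/-- `P'` is obtained from `P` by adding one new voter `j` whose ballot ranks `x` in
first place. -/
def AddVoter (P P' : Profile) (j x : ℕ) : Prop :=
  P'.cands = P.cands ∧ j ∉ P.voters ∧ P'.voters = insert j P.voters ∧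
  (∀ i ∈ P.voters, ∀ a b, (P'.ballot i a b ↔ P.ballot i a b)) ∧
  RanksFirst P.cands (P'.ballot j) x

/-- `F` satisfies positive involvement (PI). -/
def SatisfiesPI (F : Profile → Finset ℕ) : Prop :=
  ∀ (P P' : Profile) (j x : ℕ), x ∈ F P → AddVoter P P' j x → x ∈ F P'

/-- The Borda score of `x` in the profile `P` restricted to the candidates in `Y`
(for each ballot, the number of candidates in `Y` ranked below `x`, which equals
`|Y| - Rank(x)`). -/
noncomputable def bordaInY (P : Profile) (Y : Finset ℕ) (x : ℕ) : ℕ :=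
  ∑ i ∈ P.voters, (Y.filter (fun b => P.ballot i x b)).card

/-- The `n`-th stage of the Strict Nanson elimination process: while more than one
candidate remains, remove all remaining candidates whose Borda score (in the restricted
profile) is strictly less than the average Borda score of the remaining candidates
(if all remaining candidates have the same Borda score, nothing is removed and all
remaining candidates are selected). -/
noncomputable def nansonStage (P : Profile) : ℕ → Finset ℕ
  | 0 => P.cands
  | n + 1 =>
    let Y := nansonStage P n
    if Y.card ≤ 1 then Y
    else Y \ (Y.filter (fun x => bordaInY P Y x * Y.card < ∑ y ∈ Y, bordaInY P Y y))

/-- The Strict Nanson winners (the elimination process stabilizes after at most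
`|X(P)|` stages). -/
noncomputable def StrictNanson (P : Profile) : Finset ℕ := nansonStage P P.cands.card

def ballots : ℕ → List ℕ
  | 0 => [0,2,3,1]
  | 1 => [3,1,2,0]
  | 2 => [2,1,0,3]
  | 3 => [2,1,0,3]
  | 4 => [2,1,0,3]
  | 5 => [0,3,2,1]
  | 6 => [0,3,2,1]
  | 7 => [0,3,2,1]
  | 8 => [3,2,0,1]
  | 9 => [3,2,1,0]
  | _ => [2,3,1,0]

def pos (i x : ℕ) : ℕ := (ballots i).idxOf x

def C : Finset ℕ := {0,1,2,3}

def bal (i x y : ℕ) : Prop := x ∈ C ∧ y ∈ C ∧ pos i x < pos i y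

lemma bal_lin : ∀ n, ∀ i ∈ Finset.range n, n ≤ 11 → IsLinOn C (bal i) := by
  intro n i hi hn
  refine ⟨fun a b h => ⟨h.1, h.2.1⟩, fun a h => lt_irrefl _ h.2.2,
    fun a b c h1 h2 => ⟨h1.1, h2.2.1, lt_trans h1.2.2 h2.2.2⟩, ?_⟩
  intro a ha b hb hab
  have hi' : i < 11 := lt_of_lt_of_le (Finset.mem_range.mp hi) hn
  have : pos i a < pos i b ∨ pos i b < pos i a := by
    revert hab
    have : ∀ i < 11, ∀ a ∈ C, ∀ b ∈ C, a ≠ b → pos i a < pos i b ∨ pos i b < pos i a := by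
      decide
    exact this i hi' a ha b hb
  rcases this with h | h
  · exact Or.inl ⟨ha, hb, h⟩
  · exact Or.inr ⟨hb, ha, h⟩

def Pw : Profile where
  voters := Finset.range 10
  cands := C
  voters_nonempty := ⟨0, by decide⟩
  cands_nonempty := ⟨0, by decide⟩
  ballot := bal
  ballot_lin := fun i hi => bal_lin 10 i hi (by norm_num)

def Pw' : Profile where
  voters := Finset.range 11
  cands := C
  voters_nonempty := ⟨0, by decide⟩
  cands_nonempty := ⟨0, by decide⟩
  ballot := bal
  ballot_lin := fun i hi => bal_lin 11 i hi le_rfl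

def bordaC (n : ℕ) (Y : Finset ℕ) (x : ℕ) : ℕ :=
  ∑ i ∈ Finset.range n, (Y.filter (fun b => x ∈ C ∧ b ∈ C ∧ pos i x < pos i b)).card

lemma filter_irrel {α} {p : α → Prop} (h h' : DecidablePred p) (s : Finset α) :
    @Finset.filter α p h s = @Finset.filter α p h' s := by
  have : h = h' := by funext a; exact Subsingleton.elim _ _
  subst this; rfl

lemma bordaP (Y : Finset ℕ) (x : ℕ) : bordaInY Pw Y x = bordaC 10 Y x := by
  unfold bordaInY bordaC
  exact Finset.sum_congr rfl fun i _ => congrArg Finset.card (filter_irrel _ _ _)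

lemma bordaP' (Y : Finset ℕ) (x : ℕ) : bordaInY Pw' Y x = bordaC 11 Y x := by
  unfold bordaInY bordaC
  exact Finset.sum_congr rfl fun i _ => congrArg Finset.card (filter_irrel _ _ _)

lemma stage_step (P : Profile) (n : ℕ) (Y Z : Finset ℕ) (f : ℕ → ℕ) (S : ℕ)
    (h : nansonStage P n = Y) (h1 : 1 < Y.card)
    (hf : ∀ x, bordaInY P Y x = f x)
    (hS : ∑ y ∈ Y, bordaInY P Y y = S)
    (hsub : Z ⊆ Y)
    (hmem : ∀ x ∈ Y, (x ∈ Z ↔ ¬ (f x * Y.card < S))) :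
    nansonStage P (n+1) = Z := by
  rw [nansonStage, h]
  rw [if_neg (by omega)]
  have hS' : ∑ x ∈ Y, f x = S := by
    rw [← hS]; exact Finset.sum_congr rfl fun y _ => (hf y).symm
  ext x
  by_cases hx : x ∈ Y
  · simp only [Finset.mem_sdiff, Finset.mem_filter, hf, hS', hx, true_and, not_and]
    rw [hmem x hx]
  · simp only [Finset.mem_sdiff, hx, false_and]
    exact ⟨False.elim, fun h => hx (hsub h)⟩

lemma stage_fix (P : Profile) (n : ℕ) (Y : Finset ℕ)
    (h : nansonStage P n = Y) (h1 : Y.card ≤ 1) :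
    nansonStage P (n+1) = Y := by
  rw [nansonStage, h, if_pos h1]

theorem strictNanson_violates_PI :
    ∃ (P P' : Profile) (j x : ℕ),
      x ∈ StrictNanson P ∧ AddVoter P P' j x ∧ x ∉ StrictNanson P' := by
  refine ⟨Pw, Pw', 10, 2, ?_, ?_, ?_⟩
  · have h0 : nansonStage Pw 0 = C := rfl
    have h1 : nansonStage Pw 1 = ({0,2,3} : Finset ℕ) :=
      stage_step Pw 0 C _ (bordaC 10 C) 60 h0 (by decide) (bordaP C)
        (by rw [Finset.sum_congr rfl fun y _ => bordaP C y]; decide) (by decide) (by decide)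
    have h2 : nansonStage Pw 2 = ({0,2} : Finset ℕ) :=
      stage_step Pw 1 _ _ (bordaC 10 {0,2,3}) 30 h1 (by decide) (bordaP _)
        (by rw [Finset.sum_congr rfl fun y _ => bordaP _ y]; decide) (by decide) (by decide)
    have h3 : nansonStage Pw 3 = ({2} : Finset ℕ) :=
      stage_step Pw 2 _ _ (bordaC 10 {0,2}) 10 h2 (by decide) (bordaP _)
        (by rw [Finset.sum_congr rfl fun y _ => bordaP _ y]; decide) (by decide) (by decide)
    have h4 : nansonStage Pw 4 = ({2} : Finset ℕ) := stage_fix Pw 3 _ h3 (by decide)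
    show (2 : ℕ) ∈ nansonStage Pw Pw.cands.card
    rw [show Pw.cands.card = 4 from rfl, h4]
    decide
  · refine ⟨rfl, by decide, Finset.range_add_one, fun i _ a b => Iff.rfl, by decide, ?_⟩
    intro y hy hne
    exact (by decide : ∀ y ∈ C, y ≠ 2 → (2 ∈ C ∧ y ∈ C ∧ pos 10 2 < pos 10 y)) y hy hne
  · have h0 : nansonStage Pw' 0 = C := rfl
    have h1 : nansonStage Pw' 1 = ({2,3} : Finset ℕ) :=
      stage_step Pw' 0 C _ (bordaC 11 C) 66 h0 (by decide) (bordaP' C)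
        (by rw [Finset.sum_congr rfl fun y _ => bordaP' C y]; decide) (by decide) (by decide)
    have h2 : nansonStage Pw' 2 = ({3} : Finset ℕ) :=
      stage_step Pw' 1 _ _ (bordaC 11 {2,3}) 11 h1 (by decide) (bordaP' _)
        (by rw [Finset.sum_congr rfl fun y _ => bordaP' _ y]; decide) (by decide) (by decide)
    have h3 : nansonStage Pw' 3 = ({3} : Finset ℕ) := stage_fix Pw' 2 _ h2 (by decide)
    have h4 : nansonStage Pw' 4 = ({3} : Finset ℕ) := stage_fix Pw' 3 _ h3 (by decide)
    show (2 : ℕ) ∉ nansonStage Pw' Pw'.cands.card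
    rw [show Pw'.cands.card = 4 from rfl, h4]
    decide
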